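/- arXiv:2511.00727 — 3 statements merged into one kernel-verified Lean document; each statement's English description precedes it below -/
import Mathlib

section
/- Let 0 < b ≤ B and let d ≥ 1 be an integer. There exists a constant C > 0 depending only on b and B such that for every symmetric matrix A ∈ ℝ^{d×d} with b·I ⪯ A ⪯ B·I and every λ ∈ (0,1], the matrix T(λ) := λ·A + 2(1−λ)·E₁₁ is positive definite and (1−λ)·e₁ᵀ T(λ)⁻¹ e₁ ≤ C. -/
/-!
For `T = A + c • E_ii` with `A` positive semidefinite, `c ≥ 0`, and `u = T⁻¹ e_i`, the number
`s = e_iᵀ T⁻¹ e_i = u_i` also equals `uᵀ T u = uᵀ A u + c s²`; hence `c s² ≤ s`, i.e. `c s ≤ 1`.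
Taking `λ • A` for `A` and `c = 2 (1 - λ)` gives the bound `1 / 2`, uniformly in `d`, `A` and `λ`.
-/

open Matrix

namespace Matrix

theorem posSemidef_single_self {n : Type*} [DecidableEq n] (i : n) {c : ℝ} (hc : 0 ≤ c) :
    (single i i c).PosSemidef := by
  rw [← diagonal_single]
  exact PosSemidef.diagonal (Pi.single_nonneg.mpr hc)

variable {n : Type*} [Fintype n]

theorem posDef_of_mul_sum_sq_le {A : Matrix n n ℝ} {b : ℝ} (hA : A.IsSymm) (hb : 0 < b)
    (h : ∀ v : n → ℝ, b * ∑ i, v i ^ 2 ≤ v ⬝ᵥ A *ᵥ v) : A.PosDef := by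
  refine PosDef.of_dotProduct_mulVec_pos hA fun v hv => ?_
  obtain ⟨j, hj⟩ := Function.ne_iff.mp hv
  have hsum : 0 < ∑ i, v i ^ 2 :=
    (pow_two_pos_of_ne_zero hj).trans_le
      (Finset.single_le_sum (fun i _ => sq_nonneg (v i)) (Finset.mem_univ j))
  simpa using (mul_pos hb hsum).trans_le (h v)

variable [DecidableEq n]

theorem dotProduct_single_self_mulVec (v : n → ℝ) (i : n) (c : ℝ) :
    v ⬝ᵥ single i i c *ᵥ v = c * v i ^ 2 := by
  rw [single_mulVec_eq, dotProduct_smul, dotProduct_single, smul_eq_mul]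
  ring

theorem dotProduct_inv_mulVec_eq {M : Matrix n n ℝ} (hM : IsUnit M) (x : n → ℝ) :
    x ⬝ᵥ M⁻¹ *ᵥ x = M⁻¹ *ᵥ x ⬝ᵥ M *ᵥ (M⁻¹ *ᵥ x) := by
  rw [mulVec_mulVec, mul_nonsing_inv M ((isUnit_iff_isUnit_det M).mp hM), one_mulVec,
    dotProduct_comm]

theorem mul_single_dotProduct_inv_mulVec_single_le_one {A : Matrix n n ℝ} (hA : A.PosSemidef)
    {c : ℝ} (hc : 0 ≤ c) (i : n) (hT : IsUnit (A + c • single i i 1)) :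
    c * (Pi.single i 1 ⬝ᵥ (A + c • single i i 1)⁻¹ *ᵥ Pi.single i 1) ≤ 1 := by
  set u := (A + c • single i i 1)⁻¹ *ᵥ Pi.single i 1
  have hs : Pi.single i 1 ⬝ᵥ u = u i := by rw [single_dotProduct, one_mul]
  have hquad : Pi.single i 1 ⬝ᵥ u = u ⬝ᵥ A *ᵥ u + c * u i ^ 2 := by
    rw [dotProduct_inv_mulVec_eq hT, add_mulVec, dotProduct_add, smul_mulVec,
      dotProduct_smul, dotProduct_single_self_mulVec, smul_eq_mul, one_mul]
  have hA_u : 0 ≤ u ⬝ᵥ A *ᵥ u := by simpa using hA.dotProduct_mulVec_nonneg u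
  rw [hs] at hquad ⊢
  have hu_nonneg : 0 ≤ u i := by nlinarith [mul_nonneg hc (sq_nonneg (u i))]
  nlinarith

end Matrix

theorem stmt12_general (b B : ℝ) (hb : 0 < b) :
    ∃ C > (0 : ℝ), ∀ (d : ℕ) (hd : 0 < d) (A E11 : Matrix (Fin d) (Fin d) ℝ)
      (e1 : Fin d → ℝ),
      E11 = Matrix.single ⟨0, hd⟩ ⟨0, hd⟩ (1 : ℝ) →
      e1 = Pi.single ⟨0, hd⟩ (1 : ℝ) →
      A.IsSymm →
      (∀ v : Fin d → ℝ, b * ∑ i, v i ^ 2 ≤ v ⬝ᵥ A.mulVec v) →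
      (∀ v : Fin d → ℝ, v ⬝ᵥ A.mulVec v ≤ B * ∑ i, v i ^ 2) →
      ∀ lam : ℝ, 0 < lam → lam ≤ 1 →
        (lam • A + (2 * (1 - lam)) • E11).PosDef ∧
        (1 - lam) * (e1 ⬝ᵥ ((lam • A + (2 * (1 - lam)) • E11)⁻¹).mulVec e1) ≤ C := by
  refine ⟨1 / 2, one_half_pos, ?_⟩
  rintro d hd A _ _ rfl rfl hA hA_lower - lam hlam hlam_le
  have hc : 0 ≤ 2 * (1 - lam) := by linarith
  have hlamA : (lam • A).PosDef := (posDef_of_mul_sum_sq_le hA hb hA_lower).smul hlam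
  have hT := hlamA.add_posSemidef ((posSemidef_single_self ⟨0, hd⟩ zero_le_one).smul hc)
  have hbound := mul_single_dotProduct_inv_mulVec_single_le_one hlamA.posSemidef hc ⟨0, hd⟩
    hT.isUnit
  exact ⟨hT, by linarith⟩

/-- there is a constant `C` depending only on `b, B` such that for any
symmetric matrix `A` with `b·I ⪯ A ⪯ B·I` and any `λ ∈ (0,1]`, the matrix
`T(λ) = λ·A + 2(1−λ)·E₁₁` is positive definite and `(1−λ)·e₁ᵀ T(λ)⁻¹ e₁ ≤ C`. -/
theorem stmt12 (b B : ℝ) (hb : 0 < b) (hbB : b ≤ B) :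
    ∃ C > (0 : ℝ), ∀ (d : ℕ) (hd : 0 < d) (A E11 : Matrix (Fin d) (Fin d) ℝ)
      (e1 : Fin d → ℝ),
      E11 = Matrix.single ⟨0, hd⟩ ⟨0, hd⟩ (1 : ℝ) →
      e1 = Pi.single ⟨0, hd⟩ (1 : ℝ) →
      A.IsSymm →
      (∀ v : Fin d → ℝ, b * ∑ i, v i ^ 2 ≤ v ⬝ᵥ A.mulVec v) →
      (∀ v : Fin d → ℝ, v ⬝ᵥ A.mulVec v ≤ B * ∑ i, v i ^ 2) →
      ∀ lam : ℝ, 0 < lam → lam ≤ 1 →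
        (lam • A + (2 * (1 - lam)) • E11).PosDef ∧
        (1 - lam) * (e1 ⬝ᵥ ((lam • A + (2 * (1 - lam)) • E11)⁻¹).mulVec e1) ≤ C :=
  stmt12_general b B hb
end

section
/- Let 0 < b ≤ B, let d ≥ 1 be an integer, and let T₁ ∈ ℝ^{d×d} be a symmetric matrix with b·I ⪯ T₁ ⪯ B·I. For every λ ∈ (0,1] and every ε ≥ 0, the matrix M := λ·T₁ + (1−λ)·(ε·I + (2−ε)·E₁₁) is positive definite and ‖(1−λ)·M⁻¹ e₁‖₂ ≤ (1 + B/b)/2. -/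
/-!
Write `u = M⁻¹ e₁` and `s = ‖u‖`. The quadratic form of `M` dominates `λ b ‖v‖² + 2(1-λ) v₁²`,
and `uᵀ M u = u₁`, so `λ b s² + 2(1-λ) u₁² ≤ u₁`. Cauchy–Schwarz for the form of `M` gives
`1 = (e₁ᵀ M u)² ≤ (e₁ᵀ M e₁) u₁ ≤ (λB + 2(1-λ)) u₁`. Together with `u₁ ≤ s` these force
`b (λB + 2(1-λ)) s ≤ B`, and in particular `2 b (1-λ) s ≤ B`.
-/

open Matrix

theorem mul_mul_le_sub_of_sq_add_sq_le {a κ c x s : ℝ} (ha : 0 < a) (hκ : 0 ≤ κ) (hxs : x ≤ s)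
    (hquad : a * s ^ 2 + κ * x ^ 2 ≤ x) (hcx : 1 ≤ c * x) : a * c * s ≤ c - κ := by
  have hx : 0 < x := by
    refine lt_of_le_of_ne (by nlinarith [sq_nonneg s, sq_nonneg x]) fun hx0 => ?_
    rw [← hx0, mul_zero] at hcx
    exact absurd hcx (by norm_num)
  have hs : 0 < s := hx.trans_le hxs
  have hκx : κ * x ≤ 1 := by nlinarith [mul_nonneg ha.le (sq_nonneg s)]
  have hκc : κ ≤ c := le_of_mul_le_mul_right (hκx.trans hcx) hx
  suffices a * c * s * s ≤ (c - κ) * s from le_of_mul_le_mul_right this hs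
  calc a * c * s * s ≤ c * x - κ * x * (c * x) := by nlinarith
    _ ≤ (c - κ) * x := by nlinarith [mul_nonneg (mul_nonneg hκ hx.le) (sub_nonneg.2 hcx)]
    _ ≤ (c - κ) * s := mul_le_mul_of_nonneg_left hxs (sub_nonneg.2 hκc)

section
variable {n : Type*} [Fintype n]

theorem Matrix.IsSymm.dotProduct_mulVec_comm {R : Type*} [CommSemiring R] {M : Matrix n n R}
    (hM : M.IsSymm) (v w : n → R) : v ⬝ᵥ M *ᵥ w = w ⬝ᵥ M *ᵥ v := by
  rw [dotProduct_mulVec, ← mulVec_transpose, hM.eq, dotProduct_comm]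

theorem Matrix.PosSemidef.dotProduct_mulVec_sq_le {M : Matrix n n ℝ} (hM : M.PosSemidef)
    (v w : n → ℝ) : (v ⬝ᵥ M *ᵥ w) ^ 2 ≤ (v ⬝ᵥ M *ᵥ v) * (w ⬝ᵥ M *ᵥ w) := by
  have hsymm : M.IsSymm := isHermitian_iff_isSymm.mp hM.isHermitian
  have hquad (t : ℝ) :
      0 ≤ (v ⬝ᵥ M *ᵥ v) * (t * t) + 2 * (v ⬝ᵥ M *ᵥ w) * t + w ⬝ᵥ M *ᵥ w := by
    have := hM.dotProduct_mulVec_nonneg (t • v + w)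
    simp only [star_trivial, mulVec_add, mulVec_smul, dotProduct_add, add_dotProduct,
      dotProduct_smul, smul_dotProduct, smul_eq_mul, hsymm.dotProduct_mulVec_comm w v] at this
    linarith
  have := discrim_le_zero hquad
  rw [discrim] at this
  linarith

theorem Matrix.PosDef.of_forall_mul_sum_sq_le {M : Matrix n n ℝ} (hM : M.IsSymm) {a : ℝ}
    (ha : 0 < a) (hlow : ∀ v : n → ℝ, a * ∑ j, v j ^ 2 ≤ v ⬝ᵥ M *ᵥ v) : M.PosDef := by
  refine .of_dotProduct_mulVec_pos (isHermitian_iff_isSymm.mpr hM) fun v hv => ?_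
  obtain ⟨j, hj⟩ := Function.ne_iff.mp hv
  have hsum : 0 < ∑ j, v j ^ 2 :=
    Finset.sum_pos' (fun _ _ => sq_nonneg _) ⟨j, Finset.mem_univ j, pow_two_pos_of_ne_zero hj⟩
  rw [star_trivial]
  exact (mul_pos ha hsum).trans_le (hlow v)

variable [DecidableEq n]

theorem Matrix.mulVec_inv_mulVec {R : Type*} [CommRing R] {M : Matrix n n R} (hM : IsUnit M.det)
    (v : n → R) : M *ᵥ (M⁻¹ *ᵥ v) = v := by
  rw [mulVec_mulVec, mul_nonsing_inv _ hM, one_mulVec]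

theorem Matrix.PosDef.dotProduct_mulVec_inv_mulVec_single {M : Matrix n n ℝ} (hM : M.PosDef)
    (i : n) :
    (M⁻¹ *ᵥ Pi.single i 1) ⬝ᵥ M *ᵥ (M⁻¹ *ᵥ Pi.single i 1) = (M⁻¹ *ᵥ Pi.single i 1) i := by
  rw [mulVec_inv_mulVec hM.det_pos.ne'.isUnit, dotProduct_single, mul_one]

theorem Matrix.PosDef.one_le_mul_inv_mulVec_single {M : Matrix n n ℝ} (hM : M.PosDef) (i : n) :
    1 ≤ (Pi.single i 1 ⬝ᵥ M *ᵥ Pi.single i 1) * (M⁻¹ *ᵥ Pi.single i 1) i := by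
  have h := hM.posSemidef.dotProduct_mulVec_sq_le (Pi.single i 1) (M⁻¹ *ᵥ Pi.single i 1)
  rwa [hM.dotProduct_mulVec_inv_mulVec_single, mulVec_inv_mulVec hM.det_pos.ne'.isUnit,
    single_dotProduct, Pi.single_eq_same, one_mul, one_pow] at h

theorem Matrix.PosDef.mul_mul_sqrt_sum_sq_inv_mulVec_single_le {M : Matrix n n ℝ}
    (hM : M.PosDef) (i : n) {a κ c : ℝ} (ha : 0 < a) (hκ : 0 ≤ κ)
    (hlow : ∀ v : n → ℝ, a * ∑ j, v j ^ 2 + κ * v i ^ 2 ≤ v ⬝ᵥ M *ᵥ v)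
    (hc : Pi.single i 1 ⬝ᵥ M *ᵥ Pi.single i 1 ≤ c) :
    a * c * √(∑ j, (M⁻¹ *ᵥ Pi.single i 1) j ^ 2) ≤ c - κ := by
  set u := M⁻¹ *ᵥ Pi.single i 1
  have hS : 0 ≤ ∑ j, u j ^ 2 := Finset.sum_nonneg fun _ _ => sq_nonneg _
  have hquad := hlow u
  rw [hM.dotProduct_mulVec_inv_mulVec_single, ← Real.sq_sqrt hS] at hquad
  have hx : 0 ≤ u i := by
    have := hM.posSemidef.dotProduct_mulVec_nonneg u
    rwa [star_trivial, hM.dotProduct_mulVec_inv_mulVec_single] at this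
  refine mul_mul_le_sub_of_sq_add_sq_le ha hκ ?_ hquad
    ((hM.one_le_mul_inv_mulVec_single i).trans (mul_le_mul_of_nonneg_right hc hx))
  exact (le_abs_self _).trans <| Real.abs_le_sqrt <|
    Finset.single_le_sum (f := fun j => u j ^ 2) (fun _ _ => sq_nonneg _) (Finset.mem_univ i)

theorem dotProduct_mulVec_smul_add_smul_single {R : Type*} [CommRing R] (T : Matrix n n R)
    (lam ε : R) (i : n) (v : n → R) :
    v ⬝ᵥ (lam • T + (1 - lam) • (ε • (1 : Matrix n n R) + (2 - ε) • single i i 1)) *ᵥ v =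
      lam * (v ⬝ᵥ T *ᵥ v) + (1 - lam) * (ε * ∑ j, v j ^ 2 + (2 - ε) * v i ^ 2) := by
  have hE : v ⬝ᵥ single i i (1 : R) *ᵥ v = v i ^ 2 := by
    rw [single_mulVec_eq, dotProduct_smul, dotProduct_single, smul_eq_mul, one_mul, mul_one, sq]
  have hI : v ⬝ᵥ v = ∑ j, v j ^ 2 := by simp only [dotProduct, sq]
  simp only [add_mulVec, smul_mulVec, one_mulVec, dotProduct_add, dotProduct_smul,
    smul_eq_mul, hE, hI]

theorem le_dotProduct_mulVec_smul_add_smul_single {T : Matrix n n ℝ} {b lam ε : ℝ}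
    (hT : ∀ v : n → ℝ, b * ∑ j, v j ^ 2 ≤ v ⬝ᵥ T *ᵥ v) (hlam0 : 0 ≤ lam) (hlam1 : lam ≤ 1)
    (hε : 0 ≤ ε) (i : n) (v : n → ℝ) :
    lam * b * ∑ j, v j ^ 2 + 2 * (1 - lam) * v i ^ 2 ≤
      v ⬝ᵥ (lam • T + (1 - lam) • (ε • (1 : Matrix n n ℝ) + (2 - ε) • single i i 1)) *ᵥ v := by
  have hvi : v i ^ 2 ≤ ∑ j, v j ^ 2 :=
    Finset.single_le_sum (f := fun j => v j ^ 2) (fun _ _ => sq_nonneg _) (Finset.mem_univ i)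
  rw [dotProduct_mulVec_smul_add_smul_single]
  nlinarith [mul_le_mul_of_nonneg_left (hT v) hlam0,
    mul_nonneg (sub_nonneg.2 hlam1) (mul_nonneg hε (sub_nonneg.2 hvi))]

end

/-- if `T₁` is symmetric with `b·I ⪯ T₁ ⪯ B·I`, then for every `λ ∈ (0,1]`
and `ε ≥ 0`, the matrix `M = λ·T₁ + (1−λ)·(ε·I + (2−ε)·E₁₁)` is positive definite and
`‖(1−λ)·M⁻¹ e₁‖₂ ≤ (1 + B/b)/2`. -/
theorem stmt13 (b B : ℝ) (hb : 0 < b) (hbB : b ≤ B)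
    (d : ℕ) (hd : 0 < d) (T1 E11 : Matrix (Fin d) (Fin d) ℝ) (e1 : Fin d → ℝ)
    (hE11 : E11 = single ⟨0, hd⟩ ⟨0, hd⟩ (1 : ℝ))
    (he1 : e1 = Pi.single ⟨0, hd⟩ (1 : ℝ))
    (hsymm : T1.IsSymm)
    (hlow : ∀ v : Fin d → ℝ, b * ∑ i, v i ^ 2 ≤ v ⬝ᵥ T1.mulVec v)
    (hup : ∀ v : Fin d → ℝ, v ⬝ᵥ T1.mulVec v ≤ B * ∑ i, v i ^ 2) :
    ∀ lam : ℝ, 0 < lam → lam ≤ 1 → ∀ ε : ℝ, 0 ≤ ε →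
      (lam • T1 + (1 - lam) • (ε • (1 : Matrix (Fin d) (Fin d) ℝ) + (2 - ε) • E11)).PosDef ∧
      Real.sqrt (∑ i, ((1 - lam) *
          ((lam • T1 + (1 - lam) • (ε • (1 : Matrix (Fin d) (Fin d) ℝ) + (2 - ε) • E11))⁻¹).mulVec
            e1 i) ^ 2)
        ≤ (1 + B / b) / 2 := by
  intro lam hlam0 hlam1 ε hε
  subst hE11 he1
  set i : Fin d := ⟨0, hd⟩
  set M := lam • T1 + (1 - lam) • (ε • (1 : Matrix (Fin d) (Fin d) ℝ) + (2 - ε) • single i i 1)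
  have hMlow := le_dotProduct_mulVec_smul_add_smul_single hlow hlam0.le hlam1 hε i
  have hMsymm : M.IsSymm :=
    (hsymm.smul lam).add (((isSymm_one.smul ε).add (IsSymm.smul (transpose_single i i 1) _)).smul _)
  have hM : M.PosDef := .of_forall_mul_sum_sq_le hMsymm (mul_pos hlam0 hb)
    fun v => le_add_of_le_of_nonneg le_rfl (by positivity) |>.trans (hMlow v)
  refine ⟨hM, ?_⟩
  have hc : Pi.single i 1 ⬝ᵥ M *ᵥ Pi.single i 1 ≤ lam * B + 2 * (1 - lam) := by
    rw [dotProduct_mulVec_smul_add_smul_single]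
    have := hup (Pi.single i 1)
    simp only [Pi.single_apply, ite_pow, one_pow, zero_pow two_ne_zero, Finset.sum_ite_eq',
      Finset.mem_univ, if_true] at this ⊢
    nlinarith
  have hkey := hM.mul_mul_sqrt_sum_sq_inv_mulVec_single_le i (mul_pos hlam0 hb)
    (by linarith) hMlow hc
  set s := √(∑ j, (M⁻¹ *ᵥ Pi.single i 1) j ^ 2)
  have hs : 0 ≤ s := Real.sqrt_nonneg _
  have hscale : √(∑ j, ((1 - lam) * (M⁻¹ *ᵥ Pi.single i 1) j) ^ 2) = (1 - lam) * s := by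
    simp_rw [mul_pow, ← Finset.mul_sum]
    rw [Real.sqrt_mul (sq_nonneg _), Real.sqrt_sq (by linarith)]
  have hbcs : b * (lam * B + 2 * (1 - lam)) * s ≤ B := le_of_mul_le_mul_left (by linarith) hlam0
  have h2bs : 2 * b * ((1 - lam) * s) ≤ B := by
    nlinarith [mul_nonneg (mul_nonneg (mul_nonneg hb.le hlam0.le) (hb.le.trans hbB)) hs]
  rw [hscale]
  calc (1 - lam) * s ≤ B / b / 2 := by rw [div_div, le_div_iff₀ (by positivity)]; linarith
    _ ≤ (1 + B / b) / 2 := by linarith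
end

section
/- Let 𝖧 ⊆ ℝ^d be a convex set, let H : ℝ^d → ℝ^d be continuously differentiable on 𝖧, and let η* ∈ 𝖧 with H(η*) = 0. Assume: (i) ⟨∇H(η)·v, v⟩ ≥ 0 for all η ∈ 𝖧 and all v ∈ ℝ^d; (ii) ⟨∇H(η*)·v, v⟩ ≥ γ‖v‖₂² for all v ∈ ℝ^d, for some constant γ > 0; and (iii) ‖∇H(η) − ∇H(η')‖_op ≤ B₂·‖η − η'‖₂ for all η, η' ∈ 𝖧, for some constant B₂ > 0. Then for every η ∈ 𝖧: if ‖η − η*‖₂ ≤ γ/(2B₂) then ⟨H(η), η − η*⟩ ≥ (γ/2)·‖η − η*‖₂², while if ‖η − η*‖₂ > γ/(2B₂) then ⟨H(η), η − η*⟩ ≥ (γ²/(4B₂))·‖η − η*‖₂. -/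
/-!
Along the segment from `η*` to `η`, with `v = η - η*`, the function `φ t = ⟪H (η* + t • v), v⟫`
vanishes at `0` and has derivative `⟪∇H (η* + t • v) v, v⟫`, which is nonnegative and, by the
Lipschitz bound on `∇H`, at least `γ‖v‖² - B₂‖v‖³ t`. Hence
`⟪H η, v⟫ = φ 1 ≥ φ s ≥ γ‖v‖² s - B₂‖v‖³ s² / 2` for every `s ∈ [0, 1]`; take `s = 1` when `v` is
small and `s = γ / (2 B₂ ‖v‖)` otherwise.
-/

open scoped RealInnerProductSpace
open Set

theorem quadratic_le_sub_of_hasDerivAt {φ φ' : ℝ → ℝ} {a b c : ℝ}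
    (hφ : ∀ t ∈ Icc 0 c, HasDerivAt φ (φ' t) t) (hφ' : ∀ t ∈ Icc 0 c, a - b * t ≤ φ' t) :
    ∀ s ∈ Icc 0 c, a * s - b * s ^ 2 / 2 ≤ φ s - φ 0 := by
  have hquad (t : ℝ) :
      HasDerivAt (fun t ↦ a * t - b * t ^ 2 / 2 + φ 0) (a - b * t) t := by
    have := (((hasDerivAt_id' t).const_mul a).sub
      (((hasDerivAt_pow 2 t).const_mul b).div_const 2)).add_const (φ 0)
    exact this.congr_deriv (by ring)
  intro s hs
  have hcompare := image_le_of_deriv_right_le_deriv_boundary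
    (fun t _ ↦ (hquad t).continuousAt.continuousWithinAt)
    (fun t _ ↦ (hquad t).hasDerivWithinAt) (B := φ) (by simp)
    (fun t ht ↦ (hφ t ht).continuousAt.continuousWithinAt)
    (fun t ht ↦ (hφ t (Ico_subset_Icc_self ht)).hasDerivWithinAt)
    (fun t ht ↦ hφ' t (Ico_subset_Icc_self ht)) hs
  linarith

variable {E : Type*} [NormedAddCommGroup E] [InnerProductSpace ℝ E]

theorem inner_apply_self_ge_of_norm_sub_le {A A₀ : E →L[ℝ] E} {γ ε : ℝ} {v : E}
    (hA₀ : γ * ‖v‖ ^ 2 ≤ ⟪A₀ v, v⟫) (hA : ‖A - A₀‖ ≤ ε) :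
    (γ - ε) * ‖v‖ ^ 2 ≤ ⟪A v, v⟫ := by
  have hperturb : |⟪(A - A₀) v, v⟫| ≤ ε * ‖v‖ ^ 2 :=
    calc |⟪(A - A₀) v, v⟫| ≤ ‖(A - A₀) v‖ * ‖v‖ := abs_real_inner_le_norm _ _
      _ ≤ ‖A - A₀‖ * ‖v‖ * ‖v‖ := by gcongr; exact (A - A₀).le_opNorm v
      _ ≤ ε * ‖v‖ ^ 2 := by rw [mul_assoc, ← sq]; gcongr
  have hsplit : ⟪A v, v⟫ = ⟪A₀ v, v⟫ + ⟪(A - A₀) v, v⟫ := by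
    rw [sub_apply, inner_sub_left]; ring
  linarith [neg_abs_le ⟪(A - A₀) v, v⟫]

theorem hasDerivAt_inner_apply_add_smul {H : E → E} {x v : E} {t : ℝ}
    (hH : DifferentiableAt ℝ H (x + t • v)) :
    HasDerivAt (fun t : ℝ ↦ ⟪H (x + t • v), v⟫) ⟪fderiv ℝ H (x + t • v) v, v⟫ t := by
  have hline : HasDerivAt (fun t : ℝ ↦ x + t • v) v t := by
    simpa using ((hasDerivAt_id t).smul_const v).const_add x
  have h : HasDerivAt (fun t : ℝ ↦ ⟪v, H (x + t • v)⟫) ⟪v, fderiv ℝ H (x + t • v) v⟫ t :=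
    (innerSL ℝ v).hasFDerivAt.comp_hasDerivAt t (hH.hasFDerivAt.comp_hasDerivAt t hline)
  simpa only [real_inner_comm v] using h

theorem quadratic_le_inner_apply_sub {S : Set E} (hS : Convex ℝ S) {H : E → E}
    (hH : ∀ x ∈ S, DifferentiableAt ℝ H x) {x₀ : E} (hx₀ : x₀ ∈ S) (hHx₀ : H x₀ = 0) {γ B : ℝ}
    (hpsd : ∀ x ∈ S, ∀ v, 0 ≤ ⟪fderiv ℝ H x v, v⟫)
    (hpd : ∀ v, γ * ‖v‖ ^ 2 ≤ ⟪fderiv ℝ H x₀ v, v⟫)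
    (hlip : ∀ x ∈ S, ∀ y ∈ S, ‖fderiv ℝ H x - fderiv ℝ H y‖ ≤ B * ‖x - y‖)
    {x : E} (hx : x ∈ S) {s : ℝ} (hs : s ∈ Icc (0 : ℝ) 1) :
    γ * ‖x - x₀‖ ^ 2 * s - B * ‖x - x₀‖ ^ 3 * s ^ 2 / 2 ≤ ⟪H x, x - x₀⟫ := by
  set v := x - x₀
  set φ : ℝ → ℝ := fun t ↦ ⟪H (x₀ + t • v), v⟫
  have hseg (t : ℝ) (ht : t ∈ Icc (0 : ℝ) 1) : x₀ + t • v ∈ S := hS.add_smul_sub_mem hx₀ hx ht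
  have hφ (t : ℝ) (ht : t ∈ Icc (0 : ℝ) 1) : HasDerivAt φ ⟪fderiv ℝ H (x₀ + t • v) v, v⟫ t :=
    hasDerivAt_inner_apply_add_smul (hH _ (hseg t ht))
  have hφ' (t : ℝ) (ht : t ∈ Icc (0 : ℝ) 1) :
      γ * ‖v‖ ^ 2 - B * ‖v‖ ^ 3 * t ≤ ⟪fderiv ℝ H (x₀ + t • v) v, v⟫ := by
    have hdist : ‖fderiv ℝ H (x₀ + t • v) - fderiv ℝ H x₀‖ ≤ B * ‖v‖ * t := by
      simpa [norm_smul, abs_of_nonneg ht.1, mul_comm, mul_left_comm] using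
        hlip _ (hseg t ht) x₀ hx₀
    linarith [inner_apply_self_ge_of_norm_sub_le (hpd v) hdist]
  have hmono : MonotoneOn φ (Icc 0 1) :=
    monotoneOn_of_hasDerivWithinAt_nonneg (convex_Icc 0 1)
      (fun t ht ↦ (hφ t ht).continuousAt.continuousWithinAt)
      (fun t ht ↦ (hφ t (interior_subset ht)).hasDerivWithinAt)
      (fun t ht ↦ hpsd _ (hseg t (interior_subset ht)) v)
  have hφ0 : φ 0 = 0 := by simp [φ, hHx₀]
  have hφ1 : φ 1 = ⟪H x, v⟫ := by simp [φ, v]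
  have hφs := quadratic_le_sub_of_hasDerivAt hφ hφ' s hs
  have hφs1 := hmono hs (right_mem_Icc.2 zero_le_one) hs.2
  linarith

theorem stmt14_general (d : ℕ)
    (Hset : Set (EuclideanSpace ℝ (Fin d))) (hconv : Convex ℝ Hset)
    (H : EuclideanSpace ℝ (Fin d) → EuclideanSpace ℝ (Fin d))
    (hdiff : ∀ η ∈ Hset, DifferentiableAt ℝ H η)
    (ηstar : EuclideanSpace ℝ (Fin d)) (hηstar : ηstar ∈ Hset) (hH0 : H ηstar = 0)
    (γ B₂ : ℝ) (hγ : 0 < γ) (hB₂ : 0 < B₂)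
    (hpsd : ∀ η ∈ Hset, ∀ v : EuclideanSpace ℝ (Fin d), 0 ≤ ⟪fderiv ℝ H η v, v⟫)
    (hpd : ∀ v : EuclideanSpace ℝ (Fin d), γ * ‖v‖ ^ 2 ≤ ⟪fderiv ℝ H ηstar v, v⟫)
    (hlip : ∀ η ∈ Hset, ∀ η' ∈ Hset, ‖fderiv ℝ H η - fderiv ℝ H η'‖ ≤ B₂ * ‖η - η'‖) :
    ∀ η ∈ Hset,
      (‖η - ηstar‖ ≤ γ / (2 * B₂) → γ / 2 * ‖η - ηstar‖ ^ 2 ≤ ⟪H η, η - ηstar⟫) ∧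
      (γ / (2 * B₂) < ‖η - ηstar‖ → γ ^ 2 / (4 * B₂) * ‖η - ηstar‖ ≤ ⟪H η, η - ηstar⟫) := by
  intro η hη
  have key := fun s ↦ quadratic_le_inner_apply_sub hconv hdiff hηstar hH0 hpsd hpd hlip hη (s := s)
  set r := ‖η - ηstar‖
  constructor
  · intro hsmall
    have hBr : 2 * B₂ * r ≤ γ := by rwa [le_div_iff₀' (by positivity)] at hsmall
    have hkey := key 1 (right_mem_Icc.2 zero_le_one)
    nlinarith [mul_le_mul_of_nonneg_left hBr (sq_nonneg r)]
  · intro hbig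
    have hBr : γ < 2 * B₂ * r := by rwa [div_lt_iff₀' (by positivity)] at hbig
    have hr : 0 < r := (div_pos hγ (by positivity)).trans hbig
    have hkey := key (γ / (2 * B₂ * r)) ⟨by positivity, (div_le_one (by positivity)).2 hBr.le⟩
    have hval : γ * r ^ 2 * (γ / (2 * B₂ * r)) - B₂ * r ^ 3 * (γ / (2 * B₂ * r)) ^ 2 / 2
        = 3 / 2 * (γ ^ 2 / (4 * B₂) * r) := by
      field_simp
      ring
    linarith [show 0 ≤ γ ^ 2 / (4 * B₂) * r by positivity]

/-- if `H` vanishes at `η* ∈ Hset`, its Jacobian is positive semidefinite on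
the convex set `Hset`, is `γ`-positive definite at `η*`, and is `B₂`-Lipschitz on `Hset`, then
`⟨H(η), η − η*⟩ ≥ (γ/2)‖η − η*‖²` when `‖η − η*‖ ≤ γ/(2B₂)`, and
`⟨H(η), η − η*⟩ ≥ (γ²/(4B₂))‖η − η*‖` when `‖η − η*‖ > γ/(2B₂)`. -/
theorem stmt14 (d : ℕ) (hd : 0 < d)
    (Hset : Set (EuclideanSpace ℝ (Fin d))) (hconv : Convex ℝ Hset)
    (H : EuclideanSpace ℝ (Fin d) → EuclideanSpace ℝ (Fin d))
    (hdiff : ∀ η ∈ Hset, DifferentiableAt ℝ H η)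
    (ηstar : EuclideanSpace ℝ (Fin d)) (hηstar : ηstar ∈ Hset) (hH0 : H ηstar = 0)
    (γ B₂ : ℝ) (hγ : 0 < γ) (hB₂ : 0 < B₂)
    (hpsd : ∀ η ∈ Hset, ∀ v : EuclideanSpace ℝ (Fin d), 0 ≤ ⟪fderiv ℝ H η v, v⟫)
    (hpd : ∀ v : EuclideanSpace ℝ (Fin d), γ * ‖v‖ ^ 2 ≤ ⟪fderiv ℝ H ηstar v, v⟫)
    (hlip : ∀ η ∈ Hset, ∀ η' ∈ Hset, ‖fderiv ℝ H η - fderiv ℝ H η'‖ ≤ B₂ * ‖η - η'‖) :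
    ∀ η ∈ Hset,
      (‖η - ηstar‖ ≤ γ / (2 * B₂) → γ / 2 * ‖η - ηstar‖ ^ 2 ≤ ⟪H η, η - ηstar⟫) ∧
      (γ / (2 * B₂) < ‖η - ηstar‖ → γ ^ 2 / (4 * B₂) * ‖η - ηstar‖ ≤ ⟪H η, η - ηstar⟫) :=
  stmt14_general d Hset hconv H hdiff ηstar hηstar hH0 γ B₂ hγ hB₂ hpsd hpd hlip
end
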